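/- arXiv:0902.3644 — 6 statements merged into one kernel-verified Lean document; each statement's English description precedes it below -/
import Mathlib

section
/- There do not exist x, y, z ∈ 𝔽₂(t) such that y² + y·z + z² = f(x)·g(x). (This is an explicit instance of the paper's main theorem: the Châtelet surface given by y² + yz + γz² = f(x)g(x) over a global field of characteristic 2 has no rational points, the failure being explained by a Brauer–Manin obstruction.) -/
/-!
Substituting `u = a⁻⁴bx = r/s` with `r, s` coprime polynomials turns `f(x)·g(x)` into `b·P·Q` up to
a square, where `P = a³r(r+s) + s²` and `Q = a³(r² + rs + s²) + s²`; so a rational point makes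
`b·P·Q·D²` a value `N(B, C)` of the norm form `N(y, z) = y² + yz + z²` of `𝔽₄(t)/𝔽₂(t)` on
polynomials. A prime of odd degree is inert in `𝔽₄(t)`, hence divides every value of `N` to even
order. A common prime factor of `P` and `Q` divides `a` (as `r, s` are coprime), hence has even
degree, and `b ∤ P` since `P ≡ N(r, s) mod b`. So every odd-degree prime divides `b·Q` to even
order, which forces `deg (b·Q)` to be even; but `deg b` is odd and `deg Q = 3 deg a + 2 max (deg r,
deg s)` is even. Nothing changes over `𝔽_q` with `q ≡ 2 mod 3`, where odd-degree primes are again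
inert in `𝔽_{q²}(t)`.
-/

/-- `a = t⁴ + t³ + 1` in `k = 𝔽₂(t)`. -/
noncomputable def aRF : RatFunc (ZMod 2) := RatFunc.X ^ 4 + RatFunc.X ^ 3 + 1

/-- `b = t` in `k = 𝔽₂(t)`. -/
noncomputable def bRF : RatFunc (ZMod 2) := RatFunc.X

/-- `f(x) = a⁻⁴·b·x² + x + a·b⁻¹`. -/
noncomputable def fRF (x : RatFunc (ZMod 2)) : RatFunc (ZMod 2) :=
  aRF⁻¹ ^ 4 * bRF * x ^ 2 + x + aRF * bRF⁻¹

/-- `g(x) = a⁻⁸·b²·x² + a⁻⁴·b·x + a⁻³ + 1`. -/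
noncomputable def gRF (x : RatFunc (ZMod 2)) : RatFunc (ZMod 2) :=
  aRF⁻¹ ^ 8 * bRF ^ 2 * x ^ 2 + aRF⁻¹ ^ 4 * bRF * x + aRF⁻¹ ^ 3 + 1

open Polynomial UniqueFactorizationMonoid

-- the norm of `y - zω` for a root `ω` of `X² + X + 1`
def normForm {R : Type*} [CommRing R] (y z : R) : R := y ^ 2 + y * z + z ^ 2

-- homogenized `f` and `g`: for `u = a⁻⁴bx = r/s`, `f(x) = a⁴b⁻¹·P/(a³s²)` and `g(x) = Q/(a³s²)`
def chateletP {R : Type*} [CommRing R] (a r s : R) : R := a ^ 3 * r * (r + s) + s ^ 2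

def chateletQ {R : Type*} [CommRing R] (a r s : R) : R := a ^ 3 * normForm r s + s ^ 2

def chateletF {F : Type*} [Field F] (a b x : F) : F := a⁻¹ ^ 4 * b * x ^ 2 + x + a * b⁻¹

def chateletG {F : Type*} [Field F] (a b x : F) : F :=
  a⁻¹ ^ 8 * b ^ 2 * x ^ 2 + a⁻¹ ^ 4 * b * x + a⁻¹ ^ 3 + 1

section CommRing

variable {R S : Type*} [CommRing R] [CommRing S]

theorem map_normForm (f : R →+* S) (y z : R) : f (normForm y z) = normForm (f y) (f z) := by
  simp only [normForm, map_add, map_mul, map_pow]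

theorem normForm_mul_mul (p y z : R) : normForm (p * y) (p * z) = p ^ 2 * normForm y z := by
  unfold normForm; ring

theorem coeff_normForm {B C : R[X]} {n : ℕ} (hB : B.natDegree ≤ n) (hC : C.natDegree ≤ n) :
    (normForm B C).coeff (2 * n) = normForm (B.coeff n) (C.coeff n) := by
  simp only [normForm, coeff_add, coeff_pow_of_natDegree_le hB, coeff_pow_of_natDegree_le hC]
  rw [two_mul, coeff_mul_add_eq_of_natDegree_le hB hC]

theorem not_dvd_chateletP_and_dvd_chateletQ {a p r s : R} (hp : Prime p) (hpa : ¬ p ∣ a)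
    (hrs : IsCoprime r s) : ¬ (p ∣ chateletP a r s ∧ p ∣ chateletQ a r s) := by
  rintro ⟨hP, hQ⟩
  have hpa3 : ¬ p ∣ a ^ 3 := fun h => hpa (hp.dvd_of_dvd_pow h)
  have hs : p ∣ s := by
    have : p ∣ a ^ 3 * s ^ 2 := by
      convert dvd_sub hQ hP using 1
      unfold chateletP chateletQ normForm
      ring
    exact hp.dvd_of_dvd_pow ((hp.dvd_mul.mp this).resolve_left hpa3)
  have hr : p ∣ r := by
    have : p ∣ a ^ 3 * (r * (r + s)) := by
      convert dvd_sub hP (dvd_pow hs two_ne_zero) using 1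
      unfold chateletP
      ring
    rcases hp.dvd_mul.mp ((hp.dvd_mul.mp this).resolve_left hpa3) with h | h
    · exact h
    · simpa using dvd_sub h hs
  exact hp.not_isUnit (hrs.isUnit_of_dvd' hr hs)

end CommRing

theorem sq_add_self_add_one_ne_zero {F : Type*} [Field F] (hF : Nat.card F % 3 = 2) (ξ : F) :
    ξ ^ 2 + ξ + 1 ≠ 0 := by
  have : Finite F := Nat.finite_of_card_ne_zero (by omega)
  have := Fintype.ofFinite F
  rw [Nat.card_eq_fintype_card] at hF
  intro h
  have hξ : ξ ≠ 0 := by rintro rfl; norm_num at h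
  -- `ξ` is a cube root of unity, and `3` is prime to `q - 1`
  have hξ1 : ξ = 1 := by
    obtain ⟨k, hk⟩ : ∃ k, Fintype.card F - 1 = 3 * k + 1 := ⟨Fintype.card F / 3, by omega⟩
    have := FiniteField.pow_card_sub_one_eq_one ξ hξ
    rwa [hk, pow_succ, pow_mul, (by linear_combination (ξ - 1) * h : ξ ^ 3 = 1), one_pow,
      one_mul] at this
  -- so `3 = 0` in `F`, while also `q = 0` with `q ≡ 2 mod 3`
  have hq := FiniteField.cast_card_eq_zero F
  rw [← Nat.div_add_mod (Fintype.card F) 3, hF] at hq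
  push_cast at hq
  subst hξ1
  exact one_ne_zero (by linear_combination ((Fintype.card F / 3 : ℕ) + 1 : F) * h - hq)

section Field

variable {K : Type*} [Field K]

theorem natCard_adjoinRoot {p : K[X]} (hp : p ≠ 0) :
    Nat.card (AdjoinRoot p) = Nat.card K ^ p.natDegree := by
  have : Module.Finite K (AdjoinRoot p) := (AdjoinRoot.powerBasis hp).finite
  rw [Module.natCard_eq_pow_finrank (K := K), (AdjoinRoot.powerBasis hp).finrank,
    AdjoinRoot.powerBasis_dim]

theorem adjoinRoot_sq_add_self_add_one_ne_zero (hK : Nat.card K % 3 = 2) {p : K[X]}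
    (hp : Irreducible p) (hodd : Odd p.natDegree) (ξ : AdjoinRoot p) : ξ ^ 2 + ξ + 1 ≠ 0 := by
  have := Fact.mk hp
  refine sq_add_self_add_one_ne_zero ?_ ξ
  obtain ⟨k, hk⟩ := hodd
  rw [natCard_adjoinRoot hp.ne_zero, Nat.pow_mod, hK, hk, pow_succ, pow_mul, Nat.mul_mod,
    Nat.pow_mod]
  norm_num

theorem eq_zero_of_normForm_eq_zero (hK : ∀ ξ : K, ξ ^ 2 + ξ + 1 ≠ 0) {y z : K}
    (h : normForm y z = 0) : y = 0 ∧ z = 0 := by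
  by_cases hz : z = 0
  · subst hz
    simpa [normForm] using h
  · refine absurd ?_ (hK (y / z))
    unfold normForm at h
    field_simp
    linear_combination h

theorem normForm_ne_zero_and_natDegree_eq (hK : ∀ ξ : K, ξ ^ 2 + ξ + 1 ≠ 0) {B C : K[X]}
    (h : B ≠ 0 ∨ C ≠ 0) :
    normForm B C ≠ 0 ∧ (normForm B C).natDegree = 2 * max B.natDegree C.natDegree := by
  set n := max B.natDegree C.natDegree
  have hB : B.natDegree ≤ n := le_max_left _ _
  have hC : C.natDegree ≤ n := le_max_right _ _
  have hlead : (normForm B C).coeff (2 * n) ≠ 0 := by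
    rw [coeff_normForm hB hC]
    intro h0
    obtain ⟨hB0, hC0⟩ := eq_zero_of_normForm_eq_zero hK h0
    have eq_zero : ∀ D : K[X], D.natDegree = n → D.coeff n = 0 → D = 0 := fun D hD hD0 =>
      leadingCoeff_eq_zero.mp (by rwa [leadingCoeff, hD])
    rcases max_choice B.natDegree C.natDegree with hn | hn
    · obtain rfl := eq_zero B hn.symm hB0
      exact h.resolve_left (not_not.mpr rfl) (eq_zero C (by simp [n]) hC0)
    · obtain rfl := eq_zero C hn.symm hC0
      exact h.resolve_right (not_not.mpr rfl) (eq_zero B (by simp [n]) hB0)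
  have hle : (normForm B C).natDegree ≤ 2 * n := by
    unfold normForm
    refine natDegree_add_le_of_degree_le (natDegree_add_le_of_degree_le ?_ ?_) ?_
    · exact natDegree_pow_le.trans (by omega)
    · exact natDegree_mul_le.trans (by omega)
    · exact natDegree_pow_le.trans (by omega)
  exact ⟨fun h0 => hlead (by simp [h0]), le_antisymm hle (le_natDegree_of_ne_zero hlead)⟩

theorem even_natDegree_of_dvd_of_natDegree_eq_four {f p : K[X]} (hf : f.natDegree = 4)
    (hroot : ∀ x, ¬ f.IsRoot x) (hp : Irreducible p) (hpf : p ∣ f) : Even p.natDegree := by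
  obtain ⟨q, rfl⟩ := hpf
  have hq : q ≠ 0 := by rintro rfl; simp at hf
  rw [natDegree_mul hp.ne_zero hq] at hf
  have no_linear_factor : ∀ l : K[X], l ∣ p * q → l.natDegree ≠ 1 := fun l hl hl1 => by
    obtain ⟨x, hx⟩ :=
      exists_root_of_degree_eq_one ((degree_eq_iff_natDegree_eq_of_pos one_pos).mpr hl1)
    exact hroot x (hx.dvd hl)
  by_contra hodd
  rcases (by have := hp.natDegree_pos; grind : p.natDegree = 1 ∨ q.natDegree = 1) with h1 | h1
  · exact no_linear_factor p (dvd_mul_right p q) h1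
  · exact no_linear_factor q (dvd_mul_left q p) h1

theorem not_dvd_chateletP (hK : Nat.card K % 3 = 2) {a b r s : K[X]} (hb : Irreducible b)
    (hodd : Odd b.natDegree) (hab : b ∣ a - 1) (hrs : IsCoprime r s) :
    ¬ b ∣ chateletP a r s := by
  intro hdvd
  have := Fact.mk hb
  have ha : AdjoinRoot.mk b a = 1 :=
    sub_eq_zero.mp (by rw [← map_one (AdjoinRoot.mk b), ← map_sub, AdjoinRoot.mk_eq_zero.mpr hab])
  have hN : normForm (AdjoinRoot.mk b r) (AdjoinRoot.mk b s) = 0 := by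
    rw [← AdjoinRoot.mk_eq_zero.mpr hdvd]
    simp only [chateletP, normForm, map_add, map_mul, map_pow, ha]
    ring
  obtain ⟨hr, hs⟩ :=
    eq_zero_of_normForm_eq_zero (adjoinRoot_sq_add_self_add_one_ne_zero hK hb hodd) hN
  exact hb.not_isUnit
    (hrs.isUnit_of_dvd' (AdjoinRoot.mk_eq_zero.mp hr) (AdjoinRoot.mk_eq_zero.mp hs))

theorem chateletQ_ne_zero_and_even_natDegree (hK : ∀ ξ : K, ξ ^ 2 + ξ + 1 ≠ 0) {a r s : K[X]}
    (ha : Even a.natDegree) (ha0 : 0 < a.natDegree) (hs : s ≠ 0) :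
    chateletQ a r s ≠ 0 ∧ Even (chateletQ a r s).natDegree := by
  obtain ⟨hN, hNdeg⟩ := normForm_ne_zero_and_natDegree_eq hK (Or.inr hs) (B := r)
  set μ := max r.natDegree s.natDegree
  have hdeg : (a ^ 3 * normForm r s).natDegree = 3 * a.natDegree + 2 * μ := by
    rw [natDegree_mul (pow_ne_zero 3 (ne_zero_of_natDegree_gt ha0)) hN, natDegree_pow, hNdeg]
  have hlt : (s ^ 2).natDegree < (a ^ 3 * normForm r s).natDegree := by
    rw [hdeg, natDegree_pow]
    have := le_max_right r.natDegree s.natDegree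
    omega
  have hQ : (chateletQ a r s).natDegree = 3 * a.natDegree + 2 * μ := by
    rw [chateletQ, natDegree_add_eq_left_of_natDegree_lt hlt, hdeg]
  rw [hQ]
  obtain ⟨k, hk⟩ := ha
  exact ⟨ne_zero_of_natDegree_gt (n := 0) (by omega), ⟨3 * k + μ, by omega⟩⟩

end Field

theorem count_normalizedFactors_eq_zero_of_not_dvd {α : Type*} [CommMonoidWithZero α]
    [NormalizationMonoid α] [UniqueFactorizationMonoid α] [DecidableEq α] {p c : α}
    (h : ¬ p ∣ c) : (normalizedFactors c).count p = 0 :=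
  Multiset.count_eq_zero.mpr fun hp => h (dvd_of_mem_normalizedFactors hp)

section Factorization

variable {K : Type*} [Field K] [DecidableEq K]

theorem even_count_normalizedFactors_normForm {p : K[X]} (hp : Irreducible p)
    (hpn : normalize p = p) (hK : ∀ ξ : AdjoinRoot p, ξ ^ 2 + ξ + 1 ≠ 0) (B C : K[X]) :
    Even ((normalizedFactors (normForm B C)).count p) := by
  induction hn : (normForm B C).natDegree using Nat.strong_induction_on generalizing B C with
  | _ n ih =>
  by_cases h0 : normForm B C = 0
  · simp [h0]
  by_cases hdvd : p ∣ normForm B C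
  swap
  · rw [count_normalizedFactors_eq_zero_of_not_dvd hdvd]
    exact Even.zero
  have := Fact.mk hp
  obtain ⟨hB, hC⟩ : AdjoinRoot.mk p B = 0 ∧ AdjoinRoot.mk p C = 0 :=
    eq_zero_of_normForm_eq_zero hK (by rw [← map_normForm, AdjoinRoot.mk_eq_zero.mpr hdvd])
  obtain ⟨B₁, rfl⟩ := AdjoinRoot.mk_eq_zero.mp hB
  obtain ⟨C₁, rfl⟩ := AdjoinRoot.mk_eq_zero.mp hC
  rw [normForm_mul_mul] at h0 hn ⊢
  have h₁ : normForm B₁ C₁ ≠ 0 := right_ne_zero_of_mul h0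
  have hp2 : p ^ 2 ≠ 0 := pow_ne_zero 2 hp.ne_zero
  rw [normalizedFactors_mul hp2 h₁, Multiset.count_add, normalizedFactors_pow,
    normalizedFactors_irreducible hp, hpn, Multiset.count_nsmul, Multiset.count_singleton_self]
  refine (even_two.mul_right 1).add (ih _ ?_ B₁ C₁ rfl)
  rw [← hn, natDegree_mul hp2 h₁, natDegree_pow]
  linarith [hp.natDegree_pos]

theorem even_natDegree_of_forall_even_count {c : K[X]} (hc : c ≠ 0)
    (h : ∀ p : K[X], Irreducible p → normalize p = p → Odd p.natDegree →
      Even ((normalizedFactors c).count p)) : Even c.natDegree := by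
  classical
  have hdeg : c.natDegree = ((normalizedFactors c).map natDegree).sum := by
    rw [← natDegree_multiset_prod _ (zero_notMem_normalizedFactors c),
      natDegree_eq_of_degree_eq (degree_eq_degree_of_associated (prod_normalizedFactors hc))]
  rw [hdeg, Finset.sum_multiset_map_count]
  refine Finset.even_sum _ fun q hq => ?_
  rw [Multiset.mem_toFinset] at hq
  rw [smul_eq_mul]
  rcases Nat.even_or_odd q.natDegree with he | ho
  · exact he.mul_left _
  · exact (h q (irreducible_of_normalized_factor q hq) (normalize_normalized_factor q hq)
      ho).mul_right _

theorem normForm_ne_mul_chateletQ_mul_chateletP_mul_sq (hK : Nat.card K % 3 = 2) {a b r s : K[X]}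
    (ha : ∀ p, Irreducible p → p ∣ a → Even p.natDegree) (ha0 : 0 < a.natDegree)
    (hb : Irreducible b) (hodd : Odd b.natDegree) (hab : b ∣ a - 1) (hrs : IsCoprime r s)
    (hs : s ≠ 0) (B C : K[X]) {D : K[X]} (hD : D ≠ 0) :
    normForm B C ≠ b * chateletQ a r s * chateletP a r s * D ^ 2 := by
  set P := chateletP a r s
  set Q := chateletQ a r s
  intro h
  have not_dvd_a : ∀ p, Irreducible p → Odd p.natDegree → ¬ p ∣ a := fun p hp hpodd hpa =>
    Nat.not_even_iff_odd.mpr hpodd (ha p hp hpa)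
  have ha_even : Even a.natDegree :=
    even_natDegree_of_forall_even_count (ne_zero_of_natDegree_gt ha0) fun p hp _ hpodd =>
      count_normalizedFactors_eq_zero_of_not_dvd (not_dvd_a p hp hpodd) ▸ Even.zero
  obtain ⟨hQ, hQ_even⟩ : Q ≠ 0 ∧ Even Q.natDegree :=
    chateletQ_ne_zero_and_even_natDegree (sq_add_self_add_one_ne_zero hK) ha_even ha0 hs
  have hbP : ¬ b ∣ P := not_dvd_chateletP hK hb hodd hab hrs
  have hP : P ≠ 0 := fun h0 => hbP (by rw [h0]; exact dvd_zero b)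
  have hbQ : b * Q ≠ 0 := mul_ne_zero hb.ne_zero hQ
  have hcount : ∀ p, Irreducible p → normalize p = p → Odd p.natDegree →
      Even ((normalizedFactors (b * Q)).count p) := by
    intro p hp hpn hpodd
    have hN := even_count_normalizedFactors_normForm hp hpn
      (adjoinRoot_sq_add_self_add_one_ne_zero hK hp hpodd) B C
    rw [h, normalizedFactors_mul (mul_ne_zero hbQ hP) (pow_ne_zero 2 hD),
      normalizedFactors_mul hbQ hP, normalizedFactors_pow, Multiset.count_add, Multiset.count_add,
      Multiset.count_nsmul] at hN
    have not_both : ¬ (p ∣ P ∧ p ∣ b * Q) := by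
      rintro ⟨hpP, hpbQ⟩
      rcases hp.prime.dvd_mul.mp hpbQ with hpb | hpQ
      · exact hbP ((hp.dvd_symm hb hpb).trans hpP)
      · exact not_dvd_chateletP_and_dvd_chateletQ hp.prime (not_dvd_a p hp hpodd) hrs ⟨hpP, hpQ⟩
    rcases not_and_or.mp not_both with hpP | hpbQ
    · rw [count_normalizedFactors_eq_zero_of_not_dvd hpP] at hN
      simpa [Nat.even_add] using hN
    · rw [count_normalizedFactors_eq_zero_of_not_dvd hpbQ]
      exact Even.zero
  have hbQ_even := even_natDegree_of_forall_even_count hbQ hcount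
  rw [natDegree_mul hb.ne_zero hQ, Nat.even_add] at hbQ_even
  exact Nat.not_even_iff_odd.mpr hodd (hbQ_even.mpr hQ_even)

end Factorization

theorem chateletF_mul_chateletG {F : Type*} [Field F] {a b x r s : F} (ha : a ≠ 0) (hb : b ≠ 0)
    (hs : s ≠ 0) (hx : a⁻¹ ^ 4 * b * x = r / s) :
    chateletF a b x * chateletG a b x * (a * b * s ^ 2) ^ 2 =
      b * chateletQ a r s * chateletP a r s := by
  obtain rfl : x = a ^ 4 * r / (b * s) := by
    field_simp at hx ⊢
    linear_combination hx
  unfold chateletF chateletG chateletP chateletQ normForm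
  field_simp
  ring

theorem RatFunc.exists_normForm_eq_mul_sq {K : Type*} [Field K] {c : K[X]} {y z : RatFunc K}
    (h : normForm y z = algebraMap K[X] (RatFunc K) c) :
    ∃ B C D : K[X], D ≠ 0 ∧ normForm B C = c * D ^ 2 := by
  refine ⟨y.num * z.denom, z.num * y.denom, y.denom * z.denom,
    mul_ne_zero y.denom_ne_zero z.denom_ne_zero, RatFunc.algebraMap_injective K ?_⟩
  have hy := RatFunc.num_div_denom y
  have hz := RatFunc.num_div_denom z
  rw [div_eq_iff (RatFunc.algebraMap_ne_zero y.denom_ne_zero)] at hy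
  rw [div_eq_iff (RatFunc.algebraMap_ne_zero z.denom_ne_zero)] at hz
  simp only [map_normForm, map_mul, map_pow, hy, hz, ← h]
  unfold normForm
  ring

theorem normForm_ne_chateletF_mul_chateletG {K : Type*} [Field K] [DecidableEq K]
    (hK : Nat.card K % 3 = 2) {a b : K[X]}
    (ha : ∀ p, Irreducible p → p ∣ a → Even p.natDegree) (ha0 : 0 < a.natDegree)
    (hb : Irreducible b) (hodd : Odd b.natDegree) (hab : b ∣ a - 1) (x y z : RatFunc K) :
    normForm y z ≠ chateletF (algebraMap K[X] (RatFunc K) a) (algebraMap K[X] (RatFunc K) b) x *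
      chateletG (algebraMap K[X] (RatFunc K) a) (algebraMap K[X] (RatFunc K) b) x := by
  intro h
  set ι := algebraMap K[X] (RatFunc K)
  set u := (ι a)⁻¹ ^ 4 * ι b * x
  have key := chateletF_mul_chateletG (RatFunc.algebraMap_ne_zero (ne_zero_of_natDegree_gt ha0))
    (RatFunc.algebraMap_ne_zero hb.ne_zero) (RatFunc.algebraMap_ne_zero u.denom_ne_zero)
    (RatFunc.num_div_denom u).symm
  set c := ι a * ι b * ι u.denom ^ 2
  have hN : normForm (c * y) (c * z) =
      ι (b * chateletQ a u.num u.denom * chateletP a u.num u.denom) := by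
    rw [normForm_mul_mul, mul_comm, h, key]
    simp only [ι, chateletP, chateletQ, map_mul, map_add, map_pow, map_normForm]
  obtain ⟨B, C, D, hD, hBC⟩ := RatFunc.exists_normForm_eq_mul_sq hN
  exact normForm_ne_mul_chateletQ_mul_chateletP_mul_sq hK ha ha0 hb hodd hab
    u.isCoprime_num_denom u.denom_ne_zero B C hD hBC

/-- The Châtelet surface `y² + yz + z² = f(x)·g(x)` over `𝔽₂(t)` has no rational point. -/
theorem chatelet_no_rational_points :
    ¬ ∃ x y z : RatFunc (ZMod 2), y ^ 2 + y * z + z ^ 2 = fRF x * gRF x := by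
  rintro ⟨x, y, z, h⟩
  have haRF : aRF = algebraMap (ZMod 2)[X] _ (X ^ 4 + X ^ 3 + 1) := by simp [aRF]
  have hbRF : bRF = algebraMap (ZMod 2)[X] _ X := RatFunc.algebraMap_X.symm
  have hdeg : (X ^ 4 + X ^ 3 + 1 : (ZMod 2)[X]).natDegree = 4 := by compute_degree!
  have hroot : ∀ c : ZMod 2, ¬ (X ^ 4 + X ^ 3 + 1 : (ZMod 2)[X]).IsRoot c := by
    simp only [IsRoot, eval_add, eval_pow, eval_X, eval_one]
    decide
  refine normForm_ne_chateletF_mul_chateletG (by rw [Nat.card_zmod])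
    (fun p hp hpa => even_natDegree_of_dvd_of_natDegree_eq_four hdeg hroot hp hpa) (by omega)
    irreducible_X (by simp) (X_dvd_iff.mpr (by simp)) x y z ?_
  rw [← haRF, ← hbRF]
  exact h
end

section
/- There exist x, y, z in the field 𝔽₂((t⁻¹)) of formal Laurent series in t⁻¹ (the completion of 𝔽₂(t) at the place at infinity) such that y² + y·z + z² = f(x)·g(x). -/
/-- The element `t` of `𝔽₂((t⁻¹))`: it is the inverse of the uniformizer `t⁻¹`, i.e. the
Laurent series (in `t⁻¹`) whose only term is `(t⁻¹)^(-1)`. -/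
noncomputable def tLS : LaurentSeries (ZMod 2) := HahnSeries.single (-1 : ℤ) (1 : ZMod 2)

/-- `a = t⁴ + t³ + 1` viewed in `𝔽₂((t⁻¹))`. -/
noncomputable def aLS : LaurentSeries (ZMod 2) := tLS ^ 4 + tLS ^ 3 + 1

/-- `b = t` viewed in `𝔽₂((t⁻¹))`. -/
noncomputable def bLS : LaurentSeries (ZMod 2) := tLS

/-- `f(x) = a⁻⁴·b·x² + x + a·b⁻¹` in `𝔽₂((t⁻¹))`. -/
noncomputable def fLS (x : LaurentSeries (ZMod 2)) : LaurentSeries (ZMod 2) :=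
  aLS⁻¹ ^ 4 * bLS * x ^ 2 + x + aLS * bLS⁻¹

/-- `g(x) = a⁻⁸·b²·x² + a⁻⁴·b·x + a⁻³ + 1` in `𝔽₂((t⁻¹))`. -/
noncomputable def gLS (x : LaurentSeries (ZMod 2)) : LaurentSeries (ZMod 2) :=
  aLS⁻¹ ^ 8 * bLS ^ 2 * x ^ 2 + aLS⁻¹ ^ 4 * bLS * x + aLS⁻¹ ^ 3 + 1

/-!
`f` already has a root in `𝔽₂((t⁻¹))`, so `y = z = 0` works. Writing `x = a⁴ b⁻¹ w`, the equation
`f(x) = 0` becomes the Artin–Schreier equation `w² + w = a⁻³` (in characteristic `2`). Since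
`v_∞(a) = -4 < 0`, `a⁻³` lies in the maximal ideal `t⁻¹ 𝔽₂⟦t⁻¹⟧`, and there Hensel's lemma solves
the equation, the derivative `2w + 1 = 1` being a unit.
-/

open PowerSeries

theorem PowerSeries.exists_sq_add_self_eq {R : Type*} [CommRing R] {c : R⟦X⟧}
    (hc : constantCoeff c = 0) : ∃ w : R⟦X⟧, w ^ 2 + w = c := by
  have hmonic : (Polynomial.X ^ 2 + Polynomial.X - Polynomial.C c).Monic := by monicity!
  obtain ⟨w, hw, -⟩ := HenselianRing.is_henselian (I := Ideal.span {X}) _ hmonic 0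
    (by simp [Ideal.mem_span_singleton, X_dvd_iff, hc]) (by simp)
  exact ⟨w, by simpa [sub_eq_zero] using hw⟩

instance HahnSeries.charP {Γ R : Type*} [AddCommMonoid Γ] [PartialOrder Γ]
    [IsOrderedCancelAddMonoid Γ] [NonAssocSemiring R] (p : ℕ) [CharP R p] :
    CharP (HahnSeries Γ R) p :=
  charP_of_injective_ringHom HahnSeries.C_injective p

theorem inv_pow_four_mul_mul_sq_add_add_eq_zero {K : Type*} [Field K] [CharP K 2] {a b w : K}
    (ha : a ≠ 0) (hb : b ≠ 0) (hw : w ^ 2 + w = a⁻¹ ^ 3) :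
    a⁻¹ ^ 4 * b * (a ^ 4 * b⁻¹ * w) ^ 2 + a ^ 4 * b⁻¹ * w + a * b⁻¹ = 0 := by
  calc a⁻¹ ^ 4 * b * (a ^ 4 * b⁻¹ * w) ^ 2 + a ^ 4 * b⁻¹ * w + a * b⁻¹
      = a ^ 4 * b⁻¹ * (w ^ 2 + w) + a * b⁻¹ := by field_simp
    _ = a * b⁻¹ + a * b⁻¹ := by rw [hw]; field_simp
    _ = 0 := CharTwo.add_self_eq_zero _

theorem tLS_ne_zero : tLS ≠ 0 := HahnSeries.single_ne_zero one_ne_zero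

theorem ofPowerSeries_X_eq_tLS_inv : HahnSeries.ofPowerSeries ℤ (ZMod 2) X = tLS⁻¹ := by
  refine (inv_eq_of_mul_eq_one_right ?_).symm
  rw [HahnSeries.ofPowerSeries_X, tLS, HahnSeries.single_mul_single]
  norm_num

theorem aLS_mul_ofPowerSeries :
    aLS * HahnSeries.ofPowerSeries ℤ (ZMod 2) (X ^ 4 * (1 + X + X ^ 4)⁻¹) = 1 := by
  set φ := HahnSeries.ofPowerSeries ℤ (ZMod 2)
  have hP : (1 + X + X ^ 4 : (ZMod 2)⟦X⟧) * (1 + X + X ^ 4)⁻¹ = 1 :=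
    PowerSeries.mul_inv_cancel _ (by simp)
  calc aLS * φ (X ^ 4 * (1 + X + X ^ 4)⁻¹)
      = (aLS * φ X ^ 4) * φ (1 + X + X ^ 4)⁻¹ := by simp only [map_mul, map_pow]; ring
    _ = φ (1 + X + X ^ 4) * φ (1 + X + X ^ 4)⁻¹ := by
        simp only [aLS, map_add, map_one, map_pow, φ, ofPowerSeries_X_eq_tLS_inv]
        field_simp [tLS_ne_zero]
    _ = 1 := by rw [← map_mul, hP, map_one]

theorem aLS_ne_zero : aLS ≠ 0 := left_ne_zero_of_mul_eq_one aLS_mul_ofPowerSeries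

theorem exists_constantCoeff_eq_zero_ofPowerSeries_eq_aLS_inv :
    ∃ u : (ZMod 2)⟦X⟧, constantCoeff u = 0 ∧ HahnSeries.ofPowerSeries ℤ (ZMod 2) u = aLS⁻¹ :=
  ⟨_, by simp, (inv_eq_of_mul_eq_one_right aLS_mul_ofPowerSeries).symm⟩

theorem fLS_eq_zero_of_sq_add_self_eq {w : LaurentSeries (ZMod 2)} (hw : w ^ 2 + w = aLS⁻¹ ^ 3) :
    fLS (aLS ^ 4 * bLS⁻¹ * w) = 0 :=
  inv_pow_four_mul_mul_sq_add_add_eq_zero aLS_ne_zero tLS_ne_zero hw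

/-- The equation `y² + yz + z² = f(x)g(x)` has a solution in `𝔽₂((t⁻¹))`, the completion of
`𝔽₂(t)` at the place at infinity. -/
theorem chatelet_solvable_at_infinity :
    ∃ x y z : LaurentSeries (ZMod 2), y ^ 2 + y * z + z ^ 2 = fLS x * gLS x := by
  obtain ⟨u, hu0, hu⟩ := exists_constantCoeff_eq_zero_ofPowerSeries_eq_aLS_inv
  obtain ⟨w, hw⟩ := exists_sq_add_self_eq (c := u ^ 3) (by simp [hu0])
  refine ⟨aLS ^ 4 * bLS⁻¹ * HahnSeries.ofPowerSeries ℤ (ZMod 2) w, 0, 0, ?_⟩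
  rw [fLS_eq_zero_of_sq_add_self_eq (by rw [← hu, ← map_pow, ← map_pow, ← map_add, hw])]
  ring
end

section
/- Let K be a field of characteristic 2, complete with respect to a discrete valuation v : Kˣ → ℤ, with finite residue field 𝔽. Let γ be a unit of the valuation ring whose residue γ̄ ∈ 𝔽 makes X² + X + γ̄ irreducible in 𝔽[X]. Then for every c ∈ Kˣ, there exist y, z ∈ K with y² + y·z + γ·z² = c if and only if v(c) is even. -/
/-!
Write `y² + yz + γz² = z² (w² + w + γ)` with `w = y / z`. For `v w ≤ 1` the residue of
`w² + w + γ` is a value of `X² + X + γ̄`, which has no root in `𝔽`, so `w² + w + γ` is a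
unit; for `v w > 1` the term `w²` dominates. Hence the form has valuation
`max (v y) (v z) ^ 2`, an even power. Conversely, if `v c` is even we may scale `c` to a unit.
Squaring is onto the finite residue field of characteristic `2`, so `c ≡ x²` for a unit `x`,
and taking `y = x`, `z = x t / γ` turns the equation into the Artin–Schreier equation
`t² + t = a` with `a = γ (c - x²) / x²` of positive valuation; it is solved by the
convergent series `t = ∑ a ^ 2 ^ n`.
-/

open Polynomial Filter Topology IsLocalRing

namespace Valued

instance nonarchimedeanRing {R Γ₀ : Type*} [Ring R] [LinearOrderedCommGroupWithZero Γ₀]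
    [Valued R Γ₀] : NonarchimedeanRing R :=
  (toUniformSpace_eq R Γ₀).symm ▸ v.subgroups_basis.nonarchimedean

theorem exists_sq_add_self_eq {K Γ₀ : Type*} [Field K] [CharP K 2]
    [LinearOrderedCommGroupWithZero Γ₀] [MulArchimedean Γ₀] [Valued K Γ₀] [CompleteSpace K]
    {a : K} (ha : v a < 1) : ∃ t : K, t ^ 2 + t = a := by
  have hlim : Tendsto (fun n : ℕ ↦ a ^ 2 ^ n) cofinite (𝓝 0) := by
    rw [Nat.cofinite_eq_atTop]
    exact (tendsto_zero_pow_of_v_lt_one ha).comp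
      (tendsto_pow_atTop_atTop_of_one_lt one_lt_two)
  obtain ⟨t, ht⟩ := NonarchimedeanAddGroup.summable_of_tendsto_cofinite_zero hlim
  -- Squaring is additive, so it shifts the series `t = ∑ a ^ 2 ^ n` by one term: `t² = t - a`.
  have hsq : HasSum (fun n : ℕ ↦ a ^ 2 ^ (n + 1)) (t ^ 2) := by
    convert ht.map (frobenius K 2) (continuous_pow 2) using 1
    · ext n
      simp [frobenius_def, pow_succ, pow_mul]
    · exact (frobenius_def ..).symm
  have htail : HasSum (fun n : ℕ ↦ a ^ 2 ^ (n + 1)) (t - a) := by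
    simpa using (hasSum_nat_add_iff' 1).mpr ht
  exact ⟨t, by linear_combination hsq.unique htail + (t - a) * CharP.cast_eq_zero K 2⟩

variable {K Γ₀ : Type*} [Field K] [LinearOrderedCommGroupWithZero Γ₀] [Valued K Γ₀]

local notation "𝒪" => Valuation.valuationSubring (v : Valuation K Γ₀)

theorem residue_eq_zero_iff_v_lt_one (x : 𝒪) : residue 𝒪 x = 0 ↔ v (x : K) < 1 :=
  (residue_eq_zero_iff x).trans (Valuation.mem_maximalIdeal_iff _ _)

theorem exists_v_sub_sq_lt_one [CharP K 2] [Finite (IsLocalRing.ResidueField 𝒪)] (u : 𝒪) :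
    ∃ y : 𝒪, v ((u : K) - y ^ 2) < 1 := by
  have h2 : (2 : 𝒪) = 0 := Subtype.ext <| by push_cast; exact CharTwo.two_eq_zero
  have : CharP (IsLocalRing.ResidueField 𝒪) 2 :=
    CharTwo.of_one_ne_zero_of_two_eq_zero one_ne_zero <| by
      rw [← map_ofNat (residue 𝒪) 2, h2, map_zero]
  obtain ⟨r, hr⟩ := surjective_frobenius (IsLocalRing.ResidueField 𝒪) 2 (residue 𝒪 u)
  obtain ⟨y, rfl⟩ := residue_surjective r
  rw [frobenius_def] at hr
  have hlt := (residue_eq_zero_iff_v_lt_one (u - y ^ (2 : ℕ))).mp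
    (by rw [map_sub, map_pow, hr, sub_self])
  exact ⟨y, by exact_mod_cast hlt⟩

theorem v_sq_add_self_add_eq_one (γ : 𝒪) (hirr : Irreducible (X ^ 2 + X + C (residue 𝒪 γ)))
    (w : 𝒪) : v ((w : K) ^ 2 + w + γ) = 1 := by
  have hle : v ((w : K) ^ 2 + w + γ) ≤ 1 := by
    exact_mod_cast (Valuation.mem_valuationSubring_iff _ _).mp (w ^ (2 : ℕ) + w + γ).2
  refine le_antisymm hle (not_lt.mp fun hlt ↦ ?_)
  have hroot : (X ^ 2 + X + C (residue 𝒪 γ)).IsRoot (residue 𝒪 w) := by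
    have := (residue_eq_zero_iff_v_lt_one (w ^ (2 : ℕ) + w + γ)).mpr (by exact_mod_cast hlt)
    simpa only [IsRoot, eval_add, eval_pow, eval_X, eval_C, map_add, map_pow] using this
  have hdeg : (X ^ 2 + X + C (residue 𝒪 γ)).degree = 2 := by compute_degree!
  have := degree_eq_one_of_irreducible_of_root hirr hroot
  rw [hdeg] at this
  exact absurd this (by decide)

theorem v_sq_add_self_add_eq_sq {γ w : K} (hγ : v γ ≤ 1) (hw : 1 < v w) :
    v (w ^ 2 + w + γ) = v w ^ 2 := by
  have hlt : v (w + γ) < v (w ^ 2) := by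
    rw [map_pow, sq]
    calc v (w + γ) ≤ max (v w) (v γ) := Valuation.map_add _ _ _
      _ = v w := max_eq_left (hγ.trans hw.le)
      _ < v w * v w := lt_mul_of_one_lt_right (zero_lt_one.trans hw) hw
  rw [add_assoc, Valuation.map_add_eq_of_lt_left _ hlt, map_pow]

theorem v_sq_add_mul_add_mul_sq (γ : 𝒪) (hirr : Irreducible (X ^ 2 + X + C (residue 𝒪 γ)))
    (y z : K) : v (y ^ 2 + y * z + γ * z ^ 2) = max (v y) (v z) ^ 2 := by
  rcases eq_or_ne z 0 with rfl | hz
  · simp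
  have hyz : y ^ 2 + y * z + γ * z ^ 2 = z ^ 2 * ((y / z) ^ 2 + y / z + γ) := by
    field_simp
  have hvy : v y = v (y / z) * v z := by rw [← map_mul, div_mul_cancel₀ y hz]
  rw [hyz, map_mul, map_pow, hvy]
  rcases le_or_gt (v (y / z)) 1 with hw | hw
  · rw [v_sq_add_self_add_eq_one γ hirr ⟨y / z, hw⟩, mul_one,
      max_eq_right (mul_le_of_le_one_left' hw)]
  · rw [v_sq_add_self_add_eq_sq γ.2 hw, max_eq_left (le_mul_of_one_le_left' hw.le), mul_pow,
      mul_comm]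

theorem exists_sq_add_mul_add_mul_sq_eq_of_v_eq_one [CharP K 2] [MulArchimedean Γ₀]
    [CompleteSpace K] [Finite (IsLocalRing.ResidueField 𝒪)] {γ : K} (hγ0 : γ ≠ 0)
    (hγ : v γ ≤ 1) {u : K} (hu : v u = 1) : ∃ y z : K, y ^ 2 + y * z + γ * z ^ 2 = u := by
  obtain ⟨x, hx⟩ := exists_v_sub_sq_lt_one (⟨u, hu.le⟩ : 𝒪)
  have hvx : v ((x : K) ^ 2) = 1 :=
    hu ▸ Valuation.map_eq_of_sub_lt _ (by rwa [← Valuation.map_neg, neg_sub, hu])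
  have hx0 : (x : K) ≠ 0 := fun h ↦ by simp [h] at hvx
  obtain ⟨t, ht⟩ : ∃ t : K, t ^ 2 + t = γ * ((u - x ^ 2) / x ^ 2) := by
    refine exists_sq_add_self_eq ?_
    rw [map_mul, map_div₀, hvx, div_one]
    exact Right.mul_lt_one_of_le_of_lt hγ hx
  have hxt : (x : K) ^ 2 * (t ^ 2 + t) = γ * (u - x ^ 2) := by
    rw [ht]; field_simp
  refine ⟨x, x * t / γ, ?_⟩
  field_simp
  linear_combination hxt

end Valued

theorem artinSchreier_norm_form_represents_iff_even_val_general
    (K : Type*) [Field K] [CharP K 2] [vK : Valued K (WithZero (Multiplicative ℤ))]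
    [CompleteSpace K]
    (hsurj : Function.Surjective (vK.v : K → WithZero (Multiplicative ℤ)))
    [Finite (IsLocalRing.ResidueField vK.v.valuationSubring)]
    (γ : vK.v.valuationSubring)
    (hirr : Irreducible
      (X ^ 2 + X + C (IsLocalRing.residue vK.v.valuationSubring γ))) :
    ∀ c : K, c ≠ 0 →
      ((∃ y z : K, y ^ 2 + y * z + (γ : K) * z ^ 2 = c) ↔
        ∃ m : ℤ, Valued.v c = ((Multiplicative.ofAdd m : Multiplicative ℤ) :
          WithZero (Multiplicative ℤ)) ∧ Even m) := by
  intro c hc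
  simp only [← WithZero.exp_eq_coe_ofAdd]
  constructor
  · rintro ⟨y, z, rfl⟩
    set r := max (Valued.v y) (Valued.v z)
    have hr : r ≠ 0 := by
      rw [← pow_ne_zero_iff two_ne_zero, ← Valued.v_sq_add_mul_add_mul_sq γ hirr]
      exact (_root_.map_ne_zero _).mpr hc
    refine ⟨_, ?_, WithZero.log r, rfl⟩
    rw [Valued.v_sq_add_mul_add_mul_sq γ hirr, WithZero.exp_add, WithZero.exp_log hr, sq]
  · rintro ⟨_, hvc, k, rfl⟩
    obtain ⟨π, hπ⟩ := hsurj (WithZero.exp k)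
    have hπ0 : π ≠ 0 := (Valuation.ne_zero_iff _).mp (hπ ▸ WithZero.exp_ne_zero)
    have hγ : Valued.v (γ : K) = 1 := by simpa using Valued.v_sq_add_self_add_eq_one γ hirr 0
    have hγ0 : (γ : K) ≠ 0 := (Valuation.ne_zero_iff _).mp (hγ ▸ one_ne_zero)
    have hu : Valued.v (c / π ^ 2) = 1 := by
      rw [map_div₀, map_pow, hvc, hπ, WithZero.exp_add, sq, div_self (by simp)]
    obtain ⟨y, z, hyz⟩ := Valued.exists_sq_add_mul_add_mul_sq_eq_of_v_eq_one hγ0 hγ.le hu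
    refine ⟨π * y, π * z, ?_⟩
    rw [← mul_div_cancel₀ c (pow_ne_zero 2 hπ0), ← hyz]
    ring

/-- Let `K` be a complete discretely valued field of characteristic `2` (the valuation being a
surjection onto `ℤ`, encoded multiplicatively via `ℤₘ₀ = WithZero (Multiplicative ℤ)`) with
finite residue field `𝔽`.  If `γ` is a unit of the valuation ring whose residue `γ̄` makes
`X² + X + γ̄` irreducible in `𝔽[X]`, then for every `c ∈ Kˣ` the equation
`y² + yz + γz² = c` is solvable in `K` if and only if `v(c)` is even. -/
theorem artinSchreier_norm_form_represents_iff_even_val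
    (K : Type*) [Field K] [CharP K 2] [vK : Valued K (WithZero (Multiplicative ℤ))]
    [CompleteSpace K]
    (hsurj : Function.Surjective (vK.v : K → WithZero (Multiplicative ℤ)))
    [Finite (IsLocalRing.ResidueField vK.v.valuationSubring)]
    (γ : vK.v.valuationSubring) (hγunit : Valued.v (γ : K) = 1)
    (hirr : Irreducible
      (X ^ 2 + X + C (IsLocalRing.residue vK.v.valuationSubring γ))) :
    ∀ c : K, c ≠ 0 →
      ((∃ y z : K, y ^ 2 + y * z + (γ : K) * z ^ 2 = c) ↔
        ∃ m : ℤ, Valued.v c = ((Multiplicative.ofAdd m : Multiplicative ℤ) :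
          WithZero (Multiplicative ℤ)) ∧ Even m) :=
  artinSchreier_norm_form_represents_iff_even_val_general K (vK := vK) hsurj γ hirr
end

section
/- Let K be a field of characteristic 2 with a discrete valuation v : Kˣ → ℤ, and let a, b, γ ∈ Kˣ and an integer n ≥ 1 be such that v(a) is even and negative, v(b) is odd and negative, and v(γ) = 0. Let π ∈ K with v(π) = 1 and set x = π·a²/b. Then v(f(x)) is even and v(g(x)) = 0; in particular v(f(x)·g(x)) is even. Here f(x) = a^{-4n}·b·x² + x + a·b^{-1} and g(x) = a^{-8n}·b²·x² + a^{-4n}·b·x + a^{1-4n} + γ. -/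
/-- A discrete valuation on a field `K`: a surjective group homomorphism `v : Kˣ → ℤ`
(encoded as an integer-valued function on `K`, multiplicative and surjective on nonzero
elements) satisfying `v(x + y) ≥ min (v x) (v y)`. -/
structure DiscreteVal (K : Type*) [Field K] where
  /-- the underlying valuation function (its values at `0` are irrelevant) -/
  v : K → ℤ
  map_mul : ∀ x y : K, x ≠ 0 → y ≠ 0 → v (x * y) = v x + v y
  min_le_add : ∀ x y : K, x ≠ 0 → y ≠ 0 → x + y ≠ 0 → min (v x) (v y) ≤ v (x + y)
  surjective : ∀ m : ℤ, ∃ x : K, x ≠ 0 ∧ v x = m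

/-- `f(x) = a^{-4n}·b·x² + x + a·b⁻¹`. -/
noncomputable def fDV {K : Type*} [Field K] (a b : K) (n : ℤ) (x : K) : K :=
  a ^ (-(4 * n)) * b * x ^ 2 + x + a * b⁻¹

/-- `g(x) = a^{-8n}·b²·x² + a^{-4n}·b·x + a^{1-4n} + γ`. -/
noncomputable def gDV {K : Type*} [Field K] (a b γ : K) (n : ℤ) (x : K) : K :=
  a ^ (-(8 * n)) * b ^ 2 * x ^ 2 + a ^ (-(4 * n)) * b * x + a ^ (1 - 4 * n) + γ

namespace DiscreteVal

variable {K : Type*} [Field K] (w : DiscreteVal K)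

lemma map_one : w.v 1 = 0 := by
  have h := w.map_mul 1 1 one_ne_zero one_ne_zero
  rw [mul_one] at h
  omega

lemma map_inv {a : K} (ha : a ≠ 0) : w.v a⁻¹ = -w.v a := by
  have h := w.map_mul a a⁻¹ ha (inv_ne_zero ha)
  rw [mul_inv_cancel₀ ha, w.map_one] at h
  omega

lemma map_div {a b : K} (ha : a ≠ 0) (hb : b ≠ 0) : w.v (a / b) = w.v a - w.v b := by
  rw [div_eq_mul_inv, w.map_mul a b⁻¹ ha (inv_ne_zero hb), w.map_inv hb, sub_eq_add_neg]

lemma map_neg {a : K} (ha : a ≠ 0) : w.v (-a) = w.v a := by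
  have hv : w.v (-1 : K) = 0 := by
    have h := w.map_mul (-1) (-1) (neg_ne_zero.mpr one_ne_zero) (neg_ne_zero.mpr one_ne_zero)
    rw [neg_mul_neg, one_mul, w.map_one] at h
    omega
  rw [← neg_one_mul, w.map_mul _ _ (neg_ne_zero.mpr one_ne_zero) ha, hv, zero_add]

lemma map_zpow {a : K} (ha : a ≠ 0) (m : ℤ) : w.v (a ^ m) = m * w.v a := by
  induction m using Int.induction_on with
  | zero => simpa using w.map_one
  | succ k ih =>
    rw [zpow_add_one₀ ha, w.map_mul _ _ (zpow_ne_zero _ ha) ha, ih]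
    ring
  | pred k ih =>
    rw [zpow_sub_one₀ ha, w.map_mul _ _ (zpow_ne_zero _ ha) (inv_ne_zero ha), ih, w.map_inv ha]
    ring

lemma map_pow {a : K} (ha : a ≠ 0) (m : ℕ) : w.v (a ^ m) = m * w.v a := by
  rw [← zpow_natCast, w.map_zpow ha]

lemma add_ne_zero_of_lt {x y : K} (hy : y ≠ 0) (h : w.v x < w.v y) : x + y ≠ 0 := by
  intro hxy
  rw [eq_neg_of_add_eq_zero_left hxy, w.map_neg hy] at h
  exact h.false

lemma map_add_of_lt {x y : K} (hx : x ≠ 0) (hy : y ≠ 0) (h : w.v x < w.v y) :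
    w.v (x + y) = w.v x := by
  have hxy := w.add_ne_zero_of_lt hy h
  have h₁ := w.min_le_add x y hx hy hxy
  -- `x = (x + y) + (-y)` bounds `v x` from below by `min (v (x + y)) (v y)`.
  have h₂ := w.min_le_add (x + y) (-y) hxy (neg_ne_zero.mpr hy) (by rwa [add_neg_cancel_right])
  rw [add_neg_cancel_right, w.map_neg hy] at h₂
  omega

lemma eq_zero_or_lt_map_add {c : ℤ} {x y : K} (hx : x = 0 ∨ c < w.v x)
    (hy : y = 0 ∨ c < w.v y) : x + y = 0 ∨ c < w.v (x + y) := by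
  by_cases hx0 : x = 0
  · rwa [hx0, zero_add]
  by_cases hy0 : y = 0
  · rw [hy0, add_zero]; exact hx
  by_cases hxy : x + y = 0
  · exact .inl hxy
  have hmin := w.min_le_add x y hx0 hy0 hxy
  have := hx.resolve_left hx0
  have := hy.resolve_left hy0
  exact .inr (by omega)

section
variable {a b x : K} {n : ℤ}

lemma map_mul_sq_div_of_map_eq_one {π : K} (hπ0 : π ≠ 0) (hπ : w.v π = 1) (ha : a ≠ 0)
    (hb : b ≠ 0) : w.v (π * a ^ 2 / b) = 1 + 2 * w.v a - w.v b := by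
  rw [w.map_div (mul_ne_zero hπ0 (pow_ne_zero 2 ha)) hb,
    w.map_mul _ _ hπ0 (pow_ne_zero 2 ha), w.map_pow ha, hπ]
  push_cast
  ring

-- The middle term `x` is the unique term of least valuation.
lemma fDV_ne_zero_and_map_eq (ha : a ≠ 0) (hb : b ≠ 0) (hx : x ≠ 0) (hn : 1 ≤ n)
    (hA : w.v a < -1) (hvx : w.v x = 1 + 2 * w.v a - w.v b) :
    fDV a b n x ≠ 0 ∧ w.v (fDV a b n x) = w.v x := by
  have hcoeff : a ^ (-(4 * n)) * b ≠ 0 := mul_ne_zero (zpow_ne_zero _ ha) hb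
  have hquad : a ^ (-(4 * n)) * b * x ^ 2 ≠ 0 := mul_ne_zero hcoeff (pow_ne_zero 2 hx)
  have hconst : a * b⁻¹ ≠ 0 := mul_ne_zero ha (inv_ne_zero hb)
  have hv_quad : w.v (a ^ (-(4 * n)) * b * x ^ 2) = -(4 * n) * w.v a + w.v b + 2 * w.v x := by
    rw [w.map_mul _ _ hcoeff (pow_ne_zero 2 hx), w.map_mul _ _ (zpow_ne_zero _ ha) hb,
      w.map_zpow ha, w.map_pow hx]
    push_cast
    ring
  have hv_const : w.v (a * b⁻¹) = w.v a - w.v b := by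
    rw [w.map_mul _ _ ha (inv_ne_zero hb), w.map_inv hb]
    ring
  have hlt_quad : w.v x < w.v (a ^ (-(4 * n)) * b * x ^ 2) := by
    rw [hv_quad]; nlinarith
  have hsum : x + a ^ (-(4 * n)) * b * x ^ 2 ≠ 0 := w.add_ne_zero_of_lt hquad hlt_quad
  have hv_sum := w.map_add_of_lt hx hquad hlt_quad
  have hlt_const : w.v (x + a ^ (-(4 * n)) * b * x ^ 2) < w.v (a * b⁻¹) := by
    rw [hv_sum, hv_const, hvx]; omega
  have hf : fDV a b n x = (x + a ^ (-(4 * n)) * b * x ^ 2) + a * b⁻¹ := by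
    rw [fDV]; ring
  rw [hf, w.map_add_of_lt hsum hconst hlt_const, hv_sum]
  exact ⟨w.add_ne_zero_of_lt hconst hlt_const, rfl⟩

-- Every term other than `γ` has positive valuation.
lemma gDV_ne_zero_and_map_eq {γ : K} (ha : a ≠ 0) (hb : b ≠ 0) (hx : x ≠ 0) (hγ0 : γ ≠ 0)
    (hn : 1 ≤ n) (hA : w.v a < 0) (hvx : w.v x = 1 + 2 * w.v a - w.v b) (hγ : w.v γ = 0) :
    gDV a b γ n x ≠ 0 ∧ w.v (gDV a b γ n x) = 0 := by
  have hcoeff₂ : a ^ (-(8 * n)) * b ^ 2 ≠ 0 :=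
    mul_ne_zero (zpow_ne_zero _ ha) (pow_ne_zero 2 hb)
  have hcoeff₁ : a ^ (-(4 * n)) * b ≠ 0 := mul_ne_zero (zpow_ne_zero _ ha) hb
  have hpos₂ : 0 < w.v (a ^ (-(8 * n)) * b ^ 2 * x ^ 2) := by
    rw [w.map_mul _ _ hcoeff₂ (pow_ne_zero 2 hx),
      w.map_mul _ _ (zpow_ne_zero _ ha) (pow_ne_zero 2 hb), w.map_zpow ha, w.map_pow hb,
      w.map_pow hx, hvx]
    push_cast
    nlinarith
  have hpos₁ : 0 < w.v (a ^ (-(4 * n)) * b * x) := by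
    rw [w.map_mul _ _ hcoeff₁ hx, w.map_mul _ _ (zpow_ne_zero _ ha) hb, w.map_zpow ha, hvx]
    nlinarith
  have hpos₀ : 0 < w.v (a ^ (1 - 4 * n)) := by
    rw [w.map_zpow ha]
    nlinarith
  set t := a ^ (-(8 * n)) * b ^ 2 * x ^ 2 + a ^ (-(4 * n)) * b * x + a ^ (1 - 4 * n)
  have hsmall : t = 0 ∨ 0 < w.v t :=
    w.eq_zero_or_lt_map_add (w.eq_zero_or_lt_map_add (.inr hpos₂) (.inr hpos₁)) (.inr hpos₀)
  have hg : gDV a b γ n x = γ + t := by rw [gDV, add_comm]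
  rw [hg]
  by_cases ht : t = 0
  · rw [ht, add_zero]
    exact ⟨hγ0, hγ⟩
  have hlt : w.v γ < w.v t := hγ ▸ hsmall.resolve_left ht
  exact ⟨w.add_ne_zero_of_lt ht hlt, (w.map_add_of_lt hγ0 ht hlt).trans hγ⟩

end

end DiscreteVal

theorem val_f_even_and_val_g_zero_at_p_general (K : Type*) [Field K] (w : DiscreteVal K)
    (a b γ : K) (ha0 : a ≠ 0) (hb0 : b ≠ 0) (hγ0 : γ ≠ 0) (n : ℤ) (hn : 1 ≤ n)
    (haEven : Even (w.v a)) (haNeg : w.v a < 0)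
    (hbOdd : Odd (w.v b))
    (hγ : w.v γ = 0)
    (π : K) (hπ0 : π ≠ 0) (hπ : w.v π = 1)
    (x : K) (hx : x = π * a ^ 2 / b) :
    (fDV a b n x ≠ 0 ∧ Even (w.v (fDV a b n x))) ∧
    (gDV a b γ n x ≠ 0 ∧ w.v (gDV a b γ n x) = 0) ∧
    Even (w.v (fDV a b n x * gDV a b γ n x)) := by
  have hA : w.v a < -1 := by
    obtain ⟨k, hk⟩ := haEven
    omega
  have hx0 : x ≠ 0 := hx ▸ div_ne_zero (mul_ne_zero hπ0 (pow_ne_zero 2 ha0)) hb0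
  have hvx : w.v x = 1 + 2 * w.v a - w.v b :=
    hx ▸ w.map_mul_sq_div_of_map_eq_one hπ0 hπ ha0 hb0
  obtain ⟨hf0, hvf⟩ := w.fDV_ne_zero_and_map_eq ha0 hb0 hx0 hn hA hvx
  obtain ⟨hg0, hvg⟩ := w.gDV_ne_zero_and_map_eq ha0 hb0 hx0 hγ0 hn haNeg hvx hγ
  have hf_even : Even (w.v (fDV a b n x)) := by
    obtain ⟨m, hm⟩ := hbOdd
    exact ⟨w.v a - m, by omega⟩
  refine ⟨⟨hf0, hf_even⟩, ⟨hg0, hvg⟩, ?_⟩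
  rwa [w.map_mul _ _ hf0 hg0, hvg, add_zero]

/-- Local solvability computation at the place `𝔭` (Lemma 3.1 of the paper): with
`x = π·a²/b`, `v(f(x))` is even and `v(g(x)) = 0`; in particular `v(f(x)·g(x))` is even. -/
theorem val_f_even_and_val_g_zero_at_p (K : Type*) [Field K] [CharP K 2] (w : DiscreteVal K)
    (a b γ : K) (ha0 : a ≠ 0) (hb0 : b ≠ 0) (hγ0 : γ ≠ 0) (n : ℤ) (hn : 1 ≤ n)
    (haEven : Even (w.v a)) (haNeg : w.v a < 0)
    (hbOdd : Odd (w.v b)) (hbNeg : w.v b < 0)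
    (hγ : w.v γ = 0)
    (π : K) (hπ0 : π ≠ 0) (hπ : w.v π = 1)
    (x : K) (hx : x = π * a ^ 2 / b) :
    (fDV a b n x ≠ 0 ∧ Even (w.v (fDV a b n x))) ∧
    (gDV a b γ n x ≠ 0 ∧ w.v (gDV a b γ n x) = 0) ∧
    Even (w.v (fDV a b n x * gDV a b γ n x)) :=
  val_f_even_and_val_g_zero_at_p_general K w a b γ ha0 hb0 hγ0 n hn haEven haNeg hbOdd hγ π hπ0 hπ x
    hx
end

section
/- Let K be a field of characteristic 2 with a discrete valuation v : Kˣ → ℤ, valuation ring O, and let a, b, γ ∈ Kˣ and an integer n ≥ 1 be such that v(a) = v(b) = v(γ) = 0. Then: (i) for every x₀ ∈ K with v(x₀) < 0, one has v(f(x₀)) = 2·v(x₀) (in particular even); and (ii) for every x₀ ∈ K with v(x₀) ≥ 0, both f(x₀) and g(x₀) lie in O and at least one of them is a unit of O. Here f(x) = a^{-4n}·b·x² + x + a·b^{-1} and g(x) = a^{-8n}·b²·x² + a^{-4n}·b·x + a^{1-4n} + γ. -/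
namespace DVaux
variable {K : Type*} [Field K] (w : DiscreteVal K)

lemma v_one : w.v 1 = 0 := by
  have h := w.map_mul 1 1 one_ne_zero one_ne_zero
  simp at h; omega

lemma v_inv {x : K} (hx : x ≠ 0) : w.v x⁻¹ = - w.v x := by
  have h := w.map_mul x x⁻¹ hx (inv_ne_zero hx)
  rw [mul_inv_cancel₀ hx, v_one] at h
  omega

lemma v_pow {x : K} (hx : x ≠ 0) (k : ℕ) : w.v (x ^ k) = k * w.v x := by
  induction k with
  | zero => simpa using v_one w
  | succ m ih =>
    rw [pow_succ, w.map_mul _ _ (pow_ne_zero m hx) hx, ih]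
    push_cast; ring

lemma v_zpow {x : K} (hx : x ≠ 0) (m : ℤ) : w.v (x ^ m) = m * w.v x := by
  cases m with
  | ofNat k => rw [Int.ofNat_eq_coe, zpow_natCast, v_pow w hx]
  | negSucc k =>
    rw [zpow_negSucc, v_inv w (pow_ne_zero _ hx), v_pow w hx, Int.negSucc_eq]
    push_cast; ring

lemma v_add_of_lt {K : Type*} [Field K] [CharP K 2] (w : DiscreteVal K) {x y : K}
    (hx : x ≠ 0) (hy : y ≠ 0) (h : w.v x < w.v y) :
    x + y ≠ 0 ∧ w.v (x + y) = w.v x := by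
  have hne : x + y ≠ 0 := by
    intro h0
    have h1 : x = -y := eq_neg_of_add_eq_zero_left h0
    rw [CharTwo.neg_eq] at h1
    rw [h1] at h
    exact lt_irrefl _ h
  refine ⟨hne, ?_⟩
  have h1 := w.min_le_add x y hx hy hne
  have hx' : x = (x + y) + y := by
    rw [add_assoc, CharTwo.add_self_eq_zero, add_zero]
  have h2 := w.min_le_add (x + y) y hne hy (by rw [← hx']; exact hx)
  rw [← hx'] at h2
  omega

lemma mem_add {x y : K} (hx : x = 0 ∨ 0 ≤ w.v x) (hy : y = 0 ∨ 0 ≤ w.v y) :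
    x + y = 0 ∨ 0 ≤ w.v (x + y) := by
  by_cases hx0 : x = 0
  · rw [hx0, zero_add]; exact hy
  by_cases hy0 : y = 0
  · rw [hy0, add_zero]; exact hx
  by_cases h0 : x + y = 0
  · exact Or.inl h0
  right
  have h1 := w.min_le_add x y hx0 hy0 h0
  have h2 := hx.resolve_left hx0
  have h3 := hy.resolve_left hy0
  omega

lemma mem_mul {x y : K} (hx : x = 0 ∨ 0 ≤ w.v x) (hy : y = 0 ∨ 0 ≤ w.v y) :
    x * y = 0 ∨ 0 ≤ w.v (x * y) := by
  by_cases hx0 : x = 0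
  · left; rw [hx0, zero_mul]
  by_cases hy0 : y = 0
  · left; rw [hy0, mul_zero]
  right
  rw [w.map_mul x y hx0 hy0]
  have h2 := hx.resolve_left hx0
  have h3 := hy.resolve_left hy0
  omega

end DVaux

open DVaux in
/-- The local computation at places `v ≠ v_a, v_b, 𝔭` in Lemma 3.3: if `a`, `b`, `γ` are units,
then (i) `v(f(x₀)) = 2·v(x₀)` whenever `v(x₀) < 0`, and (ii) if `v(x₀) ≥ 0` then `f(x₀)` and
`g(x₀)` both lie in the valuation ring `O = {x : v x ≥ 0} ∪ {0}` and at least one of them is a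
unit of `O`. -/
theorem val_f_g_at_other_places (K : Type*) [Field K] [CharP K 2] (w : DiscreteVal K)
    (a b γ : K) (ha0 : a ≠ 0) (hb0 : b ≠ 0) (hγ0 : γ ≠ 0) (n : ℤ) (hn : 1 ≤ n)
    (ha : w.v a = 0) (hb : w.v b = 0) (hγ : w.v γ = 0) :
    (∀ x₀ : K, x₀ ≠ 0 → w.v x₀ < 0 →
      fDV a b n x₀ ≠ 0 ∧ w.v (fDV a b n x₀) = 2 * w.v x₀) ∧
    (∀ x₀ : K, (x₀ = 0 ∨ 0 ≤ w.v x₀) →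
      (fDV a b n x₀ = 0 ∨ 0 ≤ w.v (fDV a b n x₀)) ∧
      (gDV a b γ n x₀ = 0 ∨ 0 ≤ w.v (gDV a b γ n x₀)) ∧
      ((fDV a b n x₀ ≠ 0 ∧ w.v (fDV a b n x₀) = 0) ∨
        (gDV a b γ n x₀ ≠ 0 ∧ w.v (gDV a b γ n x₀) = 0))) := by
  -- valuations of the various powers of `a` are zero
  have hva : ∀ m : ℤ, w.v (a ^ m) = 0 := fun m => by
    rw [v_zpow w ha0 m, ha, mul_zero]
  have hvbi : w.v b⁻¹ = 0 := by rw [v_inv w hb0, hb, neg_zero]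
  constructor
  · -- part (i)
    intro x₀ hx₀ hv
    -- the leading term
    have hcne : a ^ (-(4 * n)) * b ≠ 0 := mul_ne_zero (zpow_ne_zero _ ha0) hb0
    have ht1ne : a ^ (-(4 * n)) * b * x₀ ^ 2 ≠ 0 :=
      mul_ne_zero hcne (pow_ne_zero 2 hx₀)
    have hvc : w.v (a ^ (-(4 * n)) * b) = 0 := by
      rw [w.map_mul _ _ (zpow_ne_zero _ ha0) hb0, hva, hb]; norm_num
    have hvt1 : w.v (a ^ (-(4 * n)) * b * x₀ ^ 2) = 2 * w.v x₀ := by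
      rw [w.map_mul _ _ hcne (pow_ne_zero 2 hx₀), hvc, v_pow w hx₀ 2]
      push_cast; ring
    have h12 := v_add_of_lt w ht1ne hx₀ (by omega)
    have ht3ne : a * b⁻¹ ≠ 0 := mul_ne_zero ha0 (inv_ne_zero hb0)
    have hvt3 : w.v (a * b⁻¹) = 0 := by
      rw [w.map_mul _ _ ha0 (inv_ne_zero hb0), ha, hvbi]; norm_num
    have hfin := v_add_of_lt w h12.1 ht3ne (by rw [h12.2, hvt3]; omega)
    refine ⟨?_, ?_⟩
    · show a ^ (-(4 * n)) * b * x₀ ^ 2 + x₀ + a * b⁻¹ ≠ 0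
      exact hfin.1
    · show w.v (a ^ (-(4 * n)) * b * x₀ ^ 2 + x₀ + a * b⁻¹) = 2 * w.v x₀
      rw [hfin.2, h12.2, hvt1]
  · -- part (ii)
    intro x₀ hx
    -- membership facts for the building blocks
    have ma : ∀ m : ℤ, a ^ m = (0:K) ∨ 0 ≤ w.v (a ^ m) := fun m => Or.inr (by rw [hva]) 
    have mb : b = 0 ∨ 0 ≤ w.v b := Or.inr (by rw [hb])
    have mbi : b⁻¹ = 0 ∨ 0 ≤ w.v b⁻¹ := Or.inr (by rw [hvbi])
    have mγ : γ = 0 ∨ 0 ≤ w.v γ := Or.inr (by rw [hγ])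
    have mx2 : x₀ ^ 2 = 0 ∨ 0 ≤ w.v (x₀ ^ 2) := by
      rw [sq]; exact mem_mul w hx hx
    have mf : fDV a b n x₀ = 0 ∨ 0 ≤ w.v (fDV a b n x₀) := by
      unfold fDV
      exact mem_add w (mem_add w (mem_mul w (mem_mul w (ma _) mb) mx2) hx)
        (mem_mul w (Or.inr (by rw [ha])) mbi)
    have mb2 : b ^ 2 = 0 ∨ 0 ≤ w.v (b ^ 2) := by
      rw [sq]; exact mem_mul w mb mb
    have mg : gDV a b γ n x₀ = 0 ∨ 0 ≤ w.v (gDV a b γ n x₀) := by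
      unfold gDV
      exact mem_add w (mem_add w (mem_add w (mem_mul w (mem_mul w (ma _) mb2) mx2)
        (mem_mul w (mem_mul w (ma _) mb) hx)) (ma _)) mγ
    refine ⟨mf, mg, ?_⟩
    -- key identity: g = a^{-4n}·b·f + γ
    have key : gDV a b γ n x₀ = a ^ (-(4 * n)) * b * fDV a b n x₀ + γ := by
      unfold fDV gDV
      rw [show (-(8 * n)) = (-(4 * n)) + (-(4 * n)) by ring, zpow_add₀ ha0,
        show (1 - 4 * n) = -(4 * n) + 1 by ring, zpow_add₀ ha0, zpow_one]
      have hbb : b * b⁻¹ = 1 := mul_inv_cancel₀ hb0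
      generalize a ^ (-(4 * n)) = c
      linear_combination (-(c * a)) * hbb
    have hcne : a ^ (-(4 * n)) * b ≠ 0 := mul_ne_zero (zpow_ne_zero _ ha0) hb0
    have hvc : w.v (a ^ (-(4 * n)) * b) = 0 := by
      rw [w.map_mul _ _ (zpow_ne_zero _ ha0) hb0, hva, hb]; norm_num
    by_cases hf0 : fDV a b n x₀ = 0
    · right
      rw [key, hf0, mul_zero, zero_add]
      exact ⟨hγ0, hγ⟩
    by_cases hvf : w.v (fDV a b n x₀) = 0
    · exact Or.inl ⟨hf0, hvf⟩
    · right
      have hvfpos : 0 < w.v (fDV a b n x₀) := by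
        have := mf.resolve_left hf0; omega
      have hvcf : w.v (a ^ (-(4 * n)) * b * fDV a b n x₀) = w.v (fDV a b n x₀) := by
        rw [w.map_mul _ _ hcne hf0, hvc, zero_add]
      have h := v_add_of_lt w hγ0 (mul_ne_zero hcne hf0) (by rw [hγ, hvcf]; omega)
      rw [add_comm] at h
      rw [key]
      exact ⟨h.1, by rw [h.2, hγ]⟩
end

section
/- Let k be a field of characteristic 2, a ∈ k, and let P ∈ k[x] be a separable polynomial of degree 3 or 4. Then the affine surface defined by y² + y·z + a·z² = P(x) in 𝔸³ is smooth over k; that is, the quotient ring k[x, y, z]/(y² + yz + az² − P(x)) is a smooth k-algebra. -/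
/-!
A hypersurface `g = 0` in affine space is smooth as soon as `g` and its partial derivatives
generate the unit ideal, say `u g + ∑ hᵢ ∂ᵢg = 1`: by first-order Taylor expansion the
substitution `Xᵢ ↦ Xᵢ - g hᵢ` sends `g` to `g (1 - ∑ hᵢ ∂ᵢg) = u g² ≡ 0` modulo `g²`,
so it induces a section of the thickening `R[X]/(g²) → R[X]/(g)`.

For `g = y² + yz + az² - P(x)` in characteristic `2` the partial derivatives are `P'(x)`, `z`
and `y`, and the quadratic form satisfies `y² + yz + az² = (y + az) z + y y`. Combined with a
Bézout relation `U P + V P' = 1`, which is what separability of `P` means, this writes `1` as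
a combination of `g` and its partials.
-/

open MvPolynomial

/-- `φ` induces a section `P ⧸ I → P ⧸ I ^ 2` of the first-order thickening of `P ⧸ I`. -/
theorem Algebra.FormallySmooth.quotient_of_retraction {R P : Type*} [CommRing R] [CommRing P]
    [Algebra R P] [Algebra.FormallySmooth R P] (I : Ideal P) (φ : P →ₐ[R] P)
    (hφ : (Ideal.Quotient.mkₐ R I).comp φ = Ideal.Quotient.mkₐ R I)
    (hφI : I ≤ (I ^ 2).comap φ) :
    Algebra.FormallySmooth R (P ⧸ I) := by
  have hker : RingHom.ker (Ideal.Quotient.mkₐ R I).toRingHom = I := Ideal.Quotient.mkₐ_ker R I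
  refine of_split (Ideal.Quotient.mkₐ R I)
    (Ideal.Quotient.liftₐ I ((Ideal.Quotient.mkₐ R _).comp φ) fun x hx ↦ ?_) ?_
  · rw [AlgHom.comp_apply, Ideal.Quotient.mkₐ_eq_mk, Ideal.Quotient.eq_zero_iff_mem, hker]
    exact hφI hx
  · exact Ideal.Quotient.algHom_ext _ (AlgHom.ext fun x ↦ congr($hφ x))

namespace MvPolynomial

variable {R σ : Type*} [CommRing R] [Fintype σ]

theorem sq_dvd_aeval_add_mul_sub {S : Type*} [CommRing S] [Algebra R S]
    (p : MvPolynomial σ R) (x h : σ → S) (ε : S) :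
    ε ^ 2 ∣ aeval (fun i ↦ x i + ε * h i) p - aeval x p -
      ε * ∑ i, h i * aeval x (pderiv i p) := by
  classical
  induction p using MvPolynomial.induction_on with
  | C r => simp
  | add p q hp hq =>
    convert dvd_add hp hq using 1
    simp only [map_add, mul_add, Finset.sum_add_distrib]
    ring
  | mul_X p i hp =>
    obtain ⟨c, hc⟩ := hp
    have hsum : ∑ j, h j * aeval x (pderiv j (p * X i)) =
        x i * ∑ j, h j * aeval x (pderiv j p) + h i * aeval x p := by
      simp [Derivation.leibniz, pderiv_X, Pi.single_apply, apply_ite, mul_add,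
        Finset.sum_add_distrib, Finset.mul_sum, add_comm, mul_left_comm]
    refine ⟨c * x i + h i * ∑ j, h j * aeval x (pderiv j p) + ε * h i * c, ?_⟩
    rw [hsum, map_mul, map_mul, aeval_X, aeval_X]
    linear_combination (x i + ε * h i) * hc

theorem formallySmooth_quotient_span_singleton {g : MvPolynomial σ R}
    (hg : Ideal.span (insert g (Set.range fun i ↦ pderiv i g)) = ⊤) :
    Algebra.FormallySmooth R (MvPolynomial σ R ⧸ Ideal.span {g}) := by
  have hone : (1 : MvPolynomial σ R) ∈
      Ideal.span {g} ⊔ Ideal.span (Set.range fun i ↦ pderiv i g) := by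
    rw [← Ideal.span_insert, hg]
    exact Submodule.mem_top
  obtain ⟨_, hy, _, hz, hu⟩ := Submodule.mem_sup.mp hone
  obtain ⟨u, rfl⟩ := Ideal.mem_span_singleton'.mp hy
  obtain ⟨h, rfl⟩ := Ideal.mem_span_range_iff_exists_fun.mp hz
  obtain ⟨c, hc⟩ := sq_dvd_aeval_add_mul_sub g X (-h) g
  refine Algebra.FormallySmooth.quotient_of_retraction _ (aeval fun i ↦ X i + g * -h i) ?_ ?_
  · exact algHom_ext fun i ↦ by simp
  · rw [Ideal.span_le, Set.singleton_subset_iff, SetLike.mem_coe, Ideal.mem_comap,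
      Ideal.span_singleton_pow, Ideal.mem_span_singleton]
    refine ⟨u + c, ?_⟩
    simp only [aeval_X_left_apply, Pi.neg_apply, neg_mul, Finset.sum_neg_distrib] at hc
    linear_combination hc - g * hu

theorem smooth_quotient_span_singleton {g : MvPolynomial σ R}
    (hg : Ideal.span (insert g (Set.range fun i ↦ pderiv i g)) = ⊤) :
    Algebra.Smooth R (MvPolynomial σ R ⧸ Ideal.span {g}) where
  formallySmooth := formallySmooth_quotient_span_singleton hg
  finitePresentation := .quotient (Submodule.fg_span_singleton g)

end MvPolynomial

noncomputable def chateletPoly {R : Type*} [CommRing R] (a : R) (P : Polynomial R) :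
    MvPolynomial (Fin 3) R :=
  X 1 ^ 2 + X 1 * X 2 + C a * X 2 ^ 2 - Polynomial.aeval (X 0) P

theorem span_chateletPoly_pderiv_eq_top {R : Type*} [CommRing R] [CharP R 2] (a : R)
    {P : Polynomial R} (hP : P.Separable) :
    Ideal.span (insert (chateletPoly a P) (Set.range fun i ↦ pderiv i (chateletPoly a P))) =
      ⊤ := by
  set g := chateletPoly a P
  have hg : g = X 1 ^ 2 + X 1 * X 2 + C a * X 2 ^ 2 - Polynomial.aeval (X 0) P := rfl
  obtain ⟨u, v, huv⟩ := hP
  have h0 : pderiv 0 g = -Polynomial.aeval (X 0) (Polynomial.derivative P) := by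
    simp [hg]
  have h1 : pderiv 1 g = 2 * X 1 + X 2 := by
    simp [hg]
  have h2 : pderiv 2 g = X 1 + C a * (2 * X 2) := by
    simp [hg]
  set U : MvPolynomial (Fin 3) R := Polynomial.aeval (X 0) u
  set V : MvPolynomial (Fin 3) R := Polynomial.aeval (X 0) v
  have hUV : U * Polynomial.aeval (X 0) P +
      V * Polynomial.aeval (X 0) (Polynomial.derivative P) = 1 := by
    simpa [U, V] using congrArg (Polynomial.aeval (X 0 : MvPolynomial (Fin 3) R)) huv
  have hcomb : (1 : MvPolynomial (Fin 3) R) = -U * g + -V * pderiv 0 g +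
      U * (X 1 + C a * X 2) * pderiv 1 g + U * X 1 * pderiv 2 g := by
    rw [h0, h1, h2]
    linear_combination U * hg - hUV - U * (X 1 ^ 2 + 2 * C a * X 1 * X 2) *
      (CharTwo.two_eq_zero : (2 : MvPolynomial (Fin 3) R) = 0)
  rw [Ideal.eq_top_iff_one, hcomb]
  refine add_mem (add_mem (add_mem ?_ ?_) ?_) ?_ <;>
    exact Ideal.mul_mem_left _ _ (Ideal.subset_span (by simp))

theorem chatelet_affine_piece_smooth_general (k : Type*) [Field k] [CharP k 2] (a : k)
    (P : Polynomial k) (hsep : P.Separable) :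
    Algebra.Smooth k
      (MvPolynomial (Fin 3) k ⧸
        Ideal.span {(X 1 : MvPolynomial (Fin 3) k) ^ 2 + X 1 * X 2 + C a * X 2 ^ 2 -
          Polynomial.aeval (X 0 : MvPolynomial (Fin 3) k) P}) :=
  MvPolynomial.smooth_quotient_span_singleton (span_chateletPoly_pderiv_eq_top a hsep)

/-- For `k` a field of characteristic `2`, `a ∈ k` and `P ∈ k[x]` a separable polynomial of
degree `3` or `4`, the affine surface `y² + yz + az² = P(x)` in `𝔸³` is smooth over `k`:
the coordinate ring `k[x, y, z]/(y² + yz + az² − P(x))` is a smooth `k`-algebra. -/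
theorem chatelet_affine_piece_smooth (k : Type*) [Field k] [CharP k 2] (a : k)
    (P : Polynomial k) (hsep : P.Separable)
    (hdeg : P.natDegree = 3 ∨ P.natDegree = 4) :
    Algebra.Smooth k
      (MvPolynomial (Fin 3) k ⧸
        Ideal.span {(X 1 : MvPolynomial (Fin 3) k) ^ 2 + X 1 * X 2 + C a * X 2 ^ 2 -
          Polynomial.aeval (X 0 : MvPolynomial (Fin 3) k) P}) :=
  chatelet_affine_piece_smooth_general k a P hsep
end
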